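/- arXiv:2201.08899 — 3 statements merged into one kernel-verified Lean document; each statement's English description precedes it below -/
import Mathlib

section
/- Let w = (w_0, …, w_η) be a finite path on a finite set V, let b ∈ V with b ≠ w_η, and set V_1 = V ∖ {b}. Define L^{(1)}(w) as follows: if b does not occur in 𝔏(w), set L^{(1)}(w) = 𝔏(w); otherwise, writing 𝔍(w) = (n_0, …, n_ι) and letting n_j be the unique element of 𝔍(w) with w_{n_j} = b, set L^{(1)}(w) = (w_{n_0}, …, w_{n_j}) ⊕ ℜ(𝔏(ℜ(w|_{[n_j, η]}))). Define L̃^{(2)}(w) = 𝔏_{V_1}(w) if b does not occur in 𝔏(w), and L̃^{(2)}(w) = (w_{n_0}, …, w_{n_j}) ⊕ ℜ(𝔏_{V_1}(ℜ(w|_{[n_j, η]}))) otherwise, and set L^{(2)}(w) = 𝔏(L̃^{(2)}(w)). Then L^{(1)}(w) = L^{(2)}(w). -/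
/-!
Both sides follow `𝔏(w)` up to its visit to `b`; the loop-free prefix `P` so produced avoids the
remaining piece `s = w|_{[n_j, η]}`, and loop erasure acts on `P` and on the rest independently.
The path `u = ℜ(s)` ends at `b`, and `𝔏_{V∖{b}}(u)` agrees with `𝔏(u)` up to its first visit to
`b`, after which it only loops back to `b`. After reversal that loop is the first thing `𝔏`
erases, and what is left is the loop-free path `ℜ(𝔏(u))`.
If `b ∉ 𝔏(w)`, then `𝔏_{V∖{b}}` makes the same jumps as `𝔏` at every vertex that `𝔏` visits,
so `𝔏(𝔏_{V∖{b}}(w)) = 𝔏(w)`.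
-/

open MeasureTheory

namespace LERW

variable {V : Type*} [DecidableEq V]

/-- The suffix of `l` strictly after the last occurrence of `a` in `l`
(`l` itself if `a` does not occur in `l`). -/
def dropToLastOcc (a : V) (l : List V) : List V :=
  (l.reverse.takeWhile (fun z => z ≠ a)).reverse

lemma dropToLastOcc_length_le (a : V) (l : List V) :
    (dropToLastOcc a l).length ≤ l.length := by
  unfold dropToLastOcc
  calc ((l.reverse.takeWhile (fun z => z ≠ a)).reverse).length
      = (l.reverse.takeWhile (fun z => z ≠ a)).length := by simp
    _ ≤ l.reverse.length := (List.takeWhile_sublist _).length_le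
    _ = l.length := by simp

/-- Partial loop erasure `𝔏_S` of a finite path, associated with a set `S` of vertices. -/
def PLE (S : Finset V) : List V → List V
  | [] => []
  | a :: rest =>
    if a ∈ S then
      if a = (a :: rest).getLast (List.cons_ne_nil a rest) then [a]
      else a :: PLE S (dropToLastOcc a rest)
    else
      if rest = [] then [a]
      else a :: PLE S rest
termination_by l => l.length
decreasing_by
  · simpa using Nat.lt_succ_of_le (dropToLastOcc_length_le a rest)
  · simp

variable [Fintype V]

/-- The (full) loop erasure `𝔏 = 𝔏_V`. -/
def LE : List V → List V := PLE Finset.univ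

/-- Iterated partial loop erasure `𝔏_{W m} ∘ ⋯ ∘ 𝔏_{W 2} ∘ 𝔏_{W 1}`. -/
def iterPLE (W : ℕ → Finset V) : ℕ → List V → List V
  | 0, l => l
  | n + 1, l => PLE (W (n + 1)) (iterPLE W n l)

/-- The remaining suffix `w|_{[n_j , η]}` of the loop-erasing walk of `𝔏` the first time
its current value equals `b` (`[]` if this never happens). -/
def LEsuffixAt (b : V) : List V → List V
  | [] => []
  | a :: rest =>
    if a = b then a :: rest
    else if a = (a :: rest).getLast (List.cons_ne_nil a rest) then []
    else LEsuffixAt b (dropToLastOcc a rest)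
termination_by l => l.length
decreasing_by
  simpa using Nat.lt_succ_of_le (dropToLastOcc_length_le a rest)

/-- Entry time `τ_A` into `A ⊆ V`, valued in `ℕ∞`. -/
noncomputable def entryTime (A : Finset V) (ω : ℕ → V) : ℕ∞ :=
  sInf {m : ℕ∞ | ∃ n : ℕ, m = (n : ℕ∞) ∧ ω n ∈ A}

/-- Entry time `τ_A` as a natural number (junk value `0` when `A` is never visited). -/
noncomputable def entryTimeNat (A : Finset V) (ω : ℕ → V) : ℕ :=
  sInf {n : ℕ | ω n ∈ A}

/-- The random finite path `X|_{[0, τ_A]} = (X_0, X_1, …, X_{τ_A})`. -/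
noncomputable def stoppedPath (A : Finset V) (ω : ℕ → V) : List V :=
  (List.range (entryTimeNat A ω + 1)).map ω

/-- Iterated hitting times `τ̊_W^{(n)}` of `W`, valued in `ℕ∞` (with the convention
`τ̊_W^{(0)} = 0`). -/
noncomputable def iterHit (W : Finset V) (ω : ℕ → V) : ℕ → ℕ∞
  | 0 => 0
  | n + 1 => sInf {m : ℕ∞ | ∃ k : ℕ, m = (k : ℕ∞) ∧ iterHit W ω n < (k : ℕ∞) ∧ ω k ∈ W}

/-- The time `τ̊_W^{(n)} ∧ τ_A`, as a natural number. -/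
noncomputable def traceTime (W A : Finset V) (ω : ℕ → V) (n : ℕ) : ℕ :=
  (iterHit W ω n ⊓ entryTime A ω).toNat

variable [MeasurableSpace V]

/-- The trace process `X̃_n = X_{τ̊_W^{(n)} ∧ τ_A}` (so `X̃_0 = X_0`). -/
noncomputable def traceProc (W A : Finset V) (ω : ℕ → V) (n : ℕ) : V :=
  ω (traceTime W A ω n)

/-- The Green function `G_B(x, y) = 𝔼_x(#{0 ≤ n < τ_{V∖B} : X_n = y})`. -/
noncomputable def green (μ : V → Measure (ℕ → V)) (B : Finset V) (x y : V) : ℝ :=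
  ∑' n : ℕ, (μ x {ω | ω n = y ∧ ∀ k ≤ n, ω k ∈ B}).toReal


open List

section DropToLastOcc

variable {V : Type*} [DecidableEq V]

lemma dropToLastOcc_suffix (a : V) (l : List V) : dropToLastOcc a l <:+ l :=
  reverse_prefix.mp (by simpa [dropToLastOcc] using takeWhile_prefix (l := l.reverse) (· ≠ a))

lemma not_mem_dropToLastOcc (a : V) (l : List V) : a ∉ dropToLastOcc a l := by
  intro h
  have := mem_takeWhile_imp (by simpa [dropToLastOcc] using h)
  simp at this

lemma dropToLastOcc_of_not_mem {a : V} {l : List V} (h : a ∉ l) : dropToLastOcc a l = l := by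
  rw [dropToLastOcc, takeWhile_eq_self_iff.mpr, reverse_reverse]
  intro x hx
  simpa using fun hxa : x = a => h (hxa ▸ mem_reverse.mp hx)

lemma dropToLastOcc_append_of_not_mem {a : V} (r : List V) {t : List V} (h : a ∉ t) :
    dropToLastOcc a (r ++ t) = dropToLastOcc a r ++ t := by
  rw [dropToLastOcc, reverse_append, takeWhile_append_of_pos, reverse_append, reverse_reverse]
  · rfl
  intro x hx
  simpa using fun hxa : x = a => h (hxa ▸ mem_reverse.mp hx)

lemma dropToLastOcc_concat (a x : V) (t : List V) :
    dropToLastOcc a (t ++ [x]) = if x = a then [] else dropToLastOcc a t ++ [x] := by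
  split_ifs with hx
  · simp [dropToLastOcc, hx]
  · exact dropToLastOcc_append_of_not_mem t (by simpa [eq_comm] using hx)

lemma dropToLastOcc_eq_nil_iff {a : V} {r : List V} :
    dropToLastOcc a r = [] ↔ (a :: r).getLast? = some a := by
  induction r using reverseRecOn with
  | nil => simp [dropToLastOcc]
  | append_singleton t x _ =>
    rw [dropToLastOcc_concat, ← cons_append, getLast?_concat]
    split_ifs with hx <;> simp [hx]

lemma getLast?_getD_dropToLastOcc (a : V) (r : List V) :
    (dropToLastOcc a r).getLast?.getD a = r.getLast?.getD a := by
  induction r using reverseRecOn with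
  | nil => simp [dropToLastOcc]
  | append_singleton t x _ =>
    rw [dropToLastOcc_concat]
    split_ifs with hx <;> simp [hx]

end DropToLastOcc

section PartialLoopErasure

variable {V : Type*} [DecidableEq V] (S : Finset V)

lemma PLE_nil : PLE S ([] : List V) = [] := by
  rw [PLE]

/-- The four cases of the definition of `PLE` collapse to one, because `dropToLastOcc a r = []`
exactly when the path `a :: r` ends at `a`. -/
lemma PLE_cons (a : V) (r : List V) :
    PLE S (a :: r) = a :: PLE S (if a ∈ S then dropToLastOcc a r else r) := by
  rw [PLE]
  split_ifs with haS hlast hr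
  · rw [dropToLastOcc_eq_nil_iff.mpr (by rw [getLast?_eq_some_getLast (cons_ne_nil a r), ← hlast]),
      PLE_nil]
  · rfl
  · rw [hr, PLE_nil]
  · rfl

lemma PLE_sublist : ∀ l : List V, PLE S l <+ l
  | [] => by rw [PLE_nil]
  | a :: r => by
    have := dropToLastOcc_length_le a r
    rw [PLE_cons]
    split_ifs
    · exact ((PLE_sublist _).trans (dropToLastOcc_suffix a r).sublist).cons_cons a
    · exact (PLE_sublist r).cons_cons a
termination_by l => l.length

lemma head?_PLE (l : List V) : (PLE S l).head? = l.head? := by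
  cases l with
  | nil => rw [PLE_nil]
  | cons a r => rw [PLE_cons]; rfl

lemma getLast?_PLE : ∀ l : List V, (PLE S l).getLast? = l.getLast?
  | [] => by rw [PLE_nil]
  | a :: r => by
    have := dropToLastOcc_length_le a r
    rw [PLE_cons, getLast?_cons, getLast?_cons]
    split_ifs
    · rw [getLast?_PLE, getLast?_getD_dropToLastOcc]
    · rw [getLast?_PLE]
termination_by l => l.length

end PartialLoopErasure

section LoopErasure

variable {V : Type*} [DecidableEq V] [Fintype V]

lemma LE_nil : LE ([] : List V) = [] :=
  PLE_nil _

lemma LE_cons (a : V) (r : List V) : LE (a :: r) = a :: LE (dropToLastOcc a r) := by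
  simp only [LE, PLE_cons, Finset.mem_univ, if_true]

lemma LE_sublist (l : List V) : LE l <+ l :=
  PLE_sublist _ l

lemma LE_nodup : ∀ l : List V, (LE l).Nodup
  | [] => by rw [LE_nil]; exact nodup_nil
  | a :: r => by
    have := dropToLastOcc_length_le a r
    rw [LE_cons]
    exact nodup_cons.mpr
      ⟨fun h => not_mem_dropToLastOcc a r ((LE_sublist _).subset h), LE_nodup _⟩
termination_by l => l.length

lemma LE_of_nodup : ∀ {l : List V}, l.Nodup → LE l = l
  | [], _ => LE_nil
  | a :: r, h => by
    rw [LE_cons, dropToLastOcc_of_not_mem (nodup_cons.mp h).1, LE_of_nodup (nodup_cons.mp h).2]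

lemma LE_eq_singleton {a : V} {l : List V} (h₁ : l.head? = some a) (h₂ : l.getLast? = some a) :
    LE l = [a] := by
  obtain ⟨r, rfl⟩ : ∃ r, l = a :: r := ⟨l.tail, (cons_head?_tail h₁).symm⟩
  rw [LE_cons, dropToLastOcc_eq_nil_iff.mpr h₂, LE_nil]

lemma LE_append : ∀ (m t : List V), (∀ x ∈ m, x ∉ t) → LE (m ++ t) = LE m ++ LE t
  | [], t, _ => by rw [LE_nil, nil_append, nil_append]
  | a :: r, t, h => by
    have := dropToLastOcc_length_le a r
    have hdisj : ∀ x ∈ dropToLastOcc a r, x ∉ t := fun x hx =>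
      h x (mem_cons_of_mem _ ((dropToLastOcc_suffix a r).subset hx))
    rw [cons_append, LE_cons, LE_cons, dropToLastOcc_append_of_not_mem r (h a mem_cons_self),
      LE_append _ t hdisj, cons_append]
termination_by m => m.length

lemma LE_PLE_of_forall_mem_LE (S : Finset V) :
    ∀ l : List V, (∀ x ∈ LE l, x ∈ S) → LE (PLE S l) = LE l
  | [], _ => by rw [PLE_nil]
  | a :: r, h => by
    have := dropToLastOcc_length_le a r
    rw [LE_cons] at h ⊢
    have haS : a ∈ S := h a mem_cons_self
    have ha : a ∉ PLE S (dropToLastOcc a r) := fun ha =>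
      not_mem_dropToLastOcc a r ((PLE_sublist S _).subset ha)
    rw [PLE_cons, if_pos haS, LE_cons, dropToLastOcc_of_not_mem ha,
      LE_PLE_of_forall_mem_LE S _ fun x hx => h x (mem_cons_of_mem _ hx)]
termination_by l => l.length

lemma LE_reverse_PLE_compl {b : V} :
    ∀ u : List V, u.getLast? = some b →
      LE (PLE (Finset.univ \ {b}) u).reverse = (LE u).reverse
  | [], h => by simp at h
  | a :: r, h => by
    by_cases hab : a = b
    · subst hab
      have hhead := head?_PLE (Finset.univ \ {a}) (a :: r)
      have hlast := getLast?_PLE (Finset.univ \ {a}) (a :: r)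
      rw [LE_eq_singleton rfl h, LE_eq_singleton (by rw [head?_reverse, hlast, h])
        (by rw [getLast?_reverse, hhead]; rfl)]
      rfl
    · have := dropToLastOcc_length_le a r
      have hd : (dropToLastOcc a r).getLast? = some b := by
        rw [getLast?_cons, Option.some.injEq, ← getLast?_getD_dropToLastOcc] at h
        cases hd : (dropToLastOcc a r).getLast? <;> simp_all
      have ha : ∀ x ∈ (PLE (Finset.univ \ {b}) (dropToLastOcc a r)).reverse, x ∉ [a] := by
        rintro x hx hxa
        rw [mem_singleton] at hxa
        subst hxa
        exact not_mem_dropToLastOcc x r ((PLE_sublist _ _).subset (mem_reverse.mp hx))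
      rw [PLE_cons, if_pos (by simpa using hab), LE_cons, reverse_cons, reverse_cons,
        LE_append _ _ ha, LE_reverse_PLE_compl _ hd, LE_of_nodup (nodup_singleton a)]
termination_by u => u.length

end LoopErasure

section SuffixAtVertex

variable {V : Type*} [DecidableEq V] {b : V}

lemma LEsuffixAt_nil : LEsuffixAt b ([] : List V) = [] := by
  rw [LEsuffixAt]

lemma LEsuffixAt_cons (a : V) (r : List V) :
    LEsuffixAt b (a :: r) = if a = b then a :: r else LEsuffixAt b (dropToLastOcc a r) := by
  rw [LEsuffixAt]
  split_ifs with hab hlast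
  · rfl
  · rw [dropToLastOcc_eq_nil_iff.mpr (by rw [getLast?_eq_some_getLast (cons_ne_nil a r), ← hlast]),
      LEsuffixAt_nil]
  · rfl

lemma LEsuffixAt_suffix : ∀ l : List V, LEsuffixAt b l <:+ l
  | [] => by rw [LEsuffixAt_nil]
  | a :: r => by
    have := dropToLastOcc_length_le a r
    rw [LEsuffixAt_cons]
    split_ifs
    · exact suffix_rfl
    · exact (LEsuffixAt_suffix _).trans ((dropToLastOcc_suffix a r).trans (suffix_cons a r))
termination_by l => l.length

variable [Fintype V]

lemma head?_LEsuffixAt : ∀ {l : List V}, b ∈ LE l → (LEsuffixAt b l).head? = some b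
  | [], h => by simp [LE_nil] at h
  | a :: r, h => by
    have := dropToLastOcc_length_le a r
    rw [LE_cons, mem_cons] at h
    rw [LEsuffixAt_cons]
    split_ifs with hab
    · rw [hab]; rfl
    · exact head?_LEsuffixAt (h.resolve_left (Ne.symm hab))
termination_by l => l.length

lemma not_mem_LEsuffixAt_of_mem_takeWhile :
    ∀ {l : List V} {x : V}, x ∈ (LE l).takeWhile (fun z => z ≠ b) → x ∉ LEsuffixAt b l
  | [], _, h => by simp [LE_nil] at h
  | a :: r, x, h => by
    have := dropToLastOcc_length_le a r
    rw [LE_cons, takeWhile_cons] at h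
    rw [LEsuffixAt_cons]
    by_cases hab : a = b
    · simp [hab] at h
    · rw [if_pos (by simpa using hab), mem_cons] at h
      rw [if_neg hab]
      rcases h with rfl | h
      · exact fun hx => not_mem_dropToLastOcc x r ((LEsuffixAt_suffix _).subset hx)
      · exact not_mem_LEsuffixAt_of_mem_takeWhile h
termination_by l => l.length

end SuffixAtVertex

theorem algorithm_one_eq_algorithm_two_general
    {V : Type*} [Fintype V] [DecidableEq V]
    (w : List V) (b : V) :
    (if b ∈ LE w then
        ((LE w).takeWhile (fun z => z ≠ b) ++ [b]) ++
          ((LE (LEsuffixAt b w).reverse).reverse).tail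
      else LE w) =
      LE (if b ∈ LE w then
            ((LE w).takeWhile (fun z => z ≠ b) ++ [b]) ++
              ((PLE (Finset.univ \ {b}) (LEsuffixAt b w).reverse).reverse).tail
          else PLE (Finset.univ \ {b}) w) := by
  by_cases hb : b ∈ LE w
  · rw [if_pos hb, if_pos hb]
    set P := (LE w).takeWhile (fun z => z ≠ b)
    set s := LEsuffixAt b w
    have hs : s.reverse.getLast? = some b := by rw [getLast?_reverse]; exact head?_LEsuffixAt hb
    have hLE : (LE s.reverse).reverse.head? = some b := by
      rw [head?_reverse]; exact (getLast?_PLE _ _).trans hs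
    have hPLE : (PLE (Finset.univ \ {b}) s.reverse).reverse.head? = some b := by
      rw [head?_reverse, getLast?_PLE, hs]
    have hdisj : ∀ x ∈ P, x ∉ (PLE (Finset.univ \ {b}) s.reverse).reverse := fun x hx hxs =>
      not_mem_LEsuffixAt_of_mem_takeWhile hx
        (mem_reverse.mp ((PLE_sublist _ _).subset (mem_reverse.mp hxs)))
    rw [append_assoc, singleton_append, cons_head?_tail hLE, append_assoc, singleton_append,
      cons_head?_tail hPLE, LE_append _ _ hdisj,
      LE_of_nodup ((LE_nodup w).sublist (takeWhile_sublist _)), LE_reverse_PLE_compl _ hs]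
  · rw [if_neg hb, if_neg hb]
    exact (LE_PLE_of_forall_mem_LE _ w fun x hx => by simpa using ne_of_mem_of_not_mem hx hb).symm

theorem algorithm_one_eq_algorithm_two
    {V : Type*} [Fintype V] [DecidableEq V]
    (w : List V) (hw : w ≠ []) (b : V) (hb : b ≠ w.getLast hw) :
    (if b ∈ LE w then
        ((LE w).takeWhile (fun z => z ≠ b) ++ [b]) ++
          ((LE (LEsuffixAt b w).reverse).reverse).tail
      else LE w) =
      LE (if b ∈ LE w then
            ((LE w).takeWhile (fun z => z ≠ b) ++ [b]) ++
              ((PLE (Finset.univ \ {b}) (LEsuffixAt b w).reverse).reverse).tail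
          else PLE (Finset.univ \ {b}) w) :=
  algorithm_one_eq_algorithm_two_general w b

end LERW
end

section
/- Let (Ω, X_n, ℙ_x) be a Markov chain on a nonempty finite set V, let B ⊆ V with B ≠ V satisfy ℙ_z(τ_{V∖B} < ∞) = 1 for every z ∈ B, and let x, y ∈ B with x ≠ y. Then G_{B∖{y}}(x,x) · G_B(y,y) = G_B(x,x) · G_{B∖{x}}(y,y). -/
open MeasureTheory

namespace LERW

variable {V : Type*} [DecidableEq V]

variable [Fintype V]

variable [MeasurableSpace V]

open Finset Filter Topology

/-!
Write `Q_B` for the kernel `P` killed outside `B`, so that `G_B = ∑ₙ Q_Bⁿ = (1 - Q_B)⁻¹`.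
Summing the Markov law over paths identifies `G_B(x, y)` with the `(x, y)` entry of this series,
and the exit hypothesis makes the row sums of `Q_Bⁿ` (the probabilities of not having left `B`
by time `n`) eventually at most `1/2`, so the series converges geometrically. Since
`Q_{B∖{y}}` is `Q_B` with row and column `y` deleted, the resolvent identity
`G_B - G_{B∖{y}} = G_B (Q_B - Q_{B∖{y}}) G_{B∖{y}}` gives
`G_{B∖{y}}(x, x) G_B(y, y) = G_B(x, x) G_B(y, y) - G_B(x, y) G_B(y, x)`,
whose right-hand side is symmetric in `x` and `y`.
-/

lemma prod_Icc_one_eq_prod_fin {M : Type*} [CommMonoid M] (f : ℕ → M) (n : ℕ) :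
    ∏ i ∈ Icc 1 n, f i = ∏ j : Fin n, f (j + 1) := by
  rw [Fin.prod_univ_eq_prod_range (fun j => f (j + 1)), ← Ico_add_one_right_eq_Icc,
    prod_Ico_eq_prod_range]
  simp [add_comm]

section Paths

variable {α R : Type*}

def pathProd [CommMonoid R] {n : ℕ} (A : α → α → R) (v : Fin (n + 1) → α) : R :=
  ∏ j : Fin n, A (v j.castSucc) (v j.succ)

lemma pathProd_snoc [CommMonoid R] {n : ℕ} (A : α → α → R) (v : Fin (n + 1) → α) (c : α) :
    pathProd A (Fin.snoc v c : Fin (n + 1 + 1) → α) = pathProd A v * A (v (Fin.last n)) c := by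
  simp only [pathProd, Fin.prod_univ_castSucc, Fin.snoc_castSucc, Fin.succ_last, Fin.snoc_last]
  congr 2
  ext j
  rw [← Fin.castSucc_succ, Fin.snoc_castSucc]

lemma pow_apply_eq_sum_pathProd [Fintype α] [DecidableEq α] [CommSemiring R]
    (A : Matrix α α R) (n : ℕ) (a b : α) :
    (A ^ n) a b = ∑ v : Fin (n + 1) → α with v 0 = a ∧ v (Fin.last n) = b, pathProd A v := by
  induction n generalizing b with
  | zero =>
    rw [sum_filter, Fintype.sum_eq_single (fun _ => a)]
    · simp [pathProd, Matrix.one_apply]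
    · intro v hv
      rw [if_neg]
      rintro ⟨h0, -⟩
      exact hv (funext fun i => by rwa [Fin.fin_one_eq_zero i])
  | succ n ih =>
    conv_rhs => rw [sum_filter, ← (Fin.snocEquiv fun _ => α).sum_comp, Fintype.sum_prod_type,
      sum_comm]
    simp only [pow_succ, Matrix.mul_apply, ih, sum_mul, sum_filter]
    rw [sum_comm]
    refine sum_congr rfl fun u _ => ?_
    have hu0 : ∀ c, (Fin.snoc u c : Fin (n + 1 + 1) → α) 0 = u 0 := fun c => by
      rw [← Fin.castSucc_zero, Fin.snoc_castSucc]
    by_cases hu : u 0 = a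
    · simp only [hu, true_and, ite_mul, zero_mul, sum_ite_eq, mem_univ, ↓reduceIte, Fin.snocEquiv,
        Equiv.coe_fn_mk, hu0, Fin.snoc_last, sum_ite_eq']
      exact (pathProd_snoc A u b).symm
    · simp [Fin.snocEquiv, hu0, hu]

end Paths

section Killed

variable {α R : Type*} [DecidableEq α]

def killedKernel [Zero R] (P : α → α → R) (B : Finset α) : Matrix α α R :=
  fun a b => if a ∈ B ∧ b ∈ B then P a b else 0

lemma killedKernel_erase_apply [Zero R] (P : α → α → R) (B : Finset α) (y a b : α) :
    killedKernel P (B.erase y) a b = if a = y ∨ b = y then 0 else killedKernel P B a b := by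
  by_cases ha : a = y <;> by_cases hb : b = y <;> simp [killedKernel, ha, hb]

lemma killedKernel_nonneg {P : α → α → ℝ} (hP : ∀ a b, 0 ≤ P a b) (B : Finset α) (a b : α) :
    0 ≤ killedKernel P B a b := by
  unfold killedKernel
  split_ifs
  exacts [hP a b, le_rfl]

lemma killedKernel_pow_succ_apply_of_notMem [Fintype α] [Semiring R] (P : α → α → R)
    {B : Finset α} {a : α} (ha : a ∉ B) (n : ℕ) (b : α) :
    (killedKernel P B ^ (n + 1)) a b = 0 := by
  rw [pow_succ', Matrix.mul_apply]
  exact sum_eq_zero fun c _ => by simp [killedKernel, ha]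

lemma pathProd_killedKernel [CommMonoidWithZero R] (P : α → α → R) (B : Finset α) {n : ℕ}
    {v : Fin (n + 1) → α} (hv : v 0 ∈ B) :
    pathProd (killedKernel P B) v = if ∀ i, v i ∈ B then pathProd P v else 0 := by
  split_ifs with hB
  · exact prod_congr rfl fun j _ => if_pos ⟨hB _, hB _⟩
  · obtain ⟨i, hi⟩ := not_forall.mp hB
    obtain ⟨j, rfl⟩ := (Fin.exists_succ_eq (x := i)).mpr (by rintro rfl; exact hi hv)
    exact prod_eq_zero (mem_univ j) (if_neg fun h => hi h.2)

end Killed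

lemma summable_of_add_le_mul {f : ℕ → ℝ} (hf : ∀ n, 0 ≤ f n) {N : ℕ} {r : ℝ} (hr : r < 1)
    (h : ∀ n, f (n + N) ≤ r * f n) : Summable f := by
  refine summable_of_sum_range_le hf (c := (∑ n ∈ range N, f n) / (1 - r)) fun K => ?_
  rw [le_div_iff₀ (by linarith)]
  have hshift : ∑ n ∈ range K, f (N + n) ≤ r * ∑ n ∈ range K, f n := by
    rw [mul_sum]
    exact sum_le_sum fun n _ => by rw [add_comm]; exact h n
  have hmono : ∑ n ∈ range K, f n ≤ ∑ n ∈ range (N + K), f n :=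
    sum_le_sum_of_subset_of_nonneg (range_subset_range.mpr (by omega)) fun n _ _ => hf n
  rw [sum_range_add] at hmono
  linarith

lemma summable_pow_of_sum_pow_le {ι : Type*} [Fintype ι] [DecidableEq ι] {A : Matrix ι ι ℝ}
    (hA : ∀ i j, 0 ≤ A i j) {N : ℕ} {r : ℝ} (hr : r < 1) (hN : ∀ i, ∑ j, (A ^ N) i j ≤ r) :
    Summable (A ^ ·) := by
  refine Pi.summable.mpr fun i => Pi.summable.mpr fun j => ?_
  have hrow : Summable fun n => ∑ j, (A ^ n) i j := by
    refine summable_of_add_le_mul (N := N)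
      (fun n => sum_nonneg fun j _ => Matrix.pow_apply_nonneg hA n i j) hr fun n => ?_
    calc ∑ j, (A ^ (n + N)) i j = ∑ c, (A ^ n) i c * ∑ j, (A ^ N) c j := by
          simp only [pow_add, Matrix.mul_apply, mul_sum]
          exact sum_comm
      _ ≤ ∑ c, (A ^ n) i c * r :=
          sum_le_sum fun c _ => mul_le_mul_of_nonneg_left (hN c) (Matrix.pow_apply_nonneg hA n i c)
      _ = r * ∑ j, (A ^ n) i j := by rw [← sum_mul, mul_comm]
  exact hrow.of_nonneg_of_le (fun n => Matrix.pow_apply_nonneg hA n i j) fun n =>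
    single_le_sum (fun c _ => Matrix.pow_apply_nonneg hA n i c) (mem_univ j)

lemma matrix_tsum_apply {X m n R : Type*} [AddCommMonoid R] [TopologicalSpace R] [T2Space R]
    {f : X → Matrix m n R} (hf : Summable f) (i : m) (j : n) :
    (∑' x, f x) i j = ∑' x, f x i j :=
  (congr_fun (tsum_apply hf) j).trans (tsum_apply (Pi.summable.mp hf i))

lemma erase_row_col_inv_apply_mul {R ι : Type*} [CommRing R] [Fintype ι] [DecidableEq ι]
    {Q Q' G G' : Matrix ι ι R} (hG : G * (1 - Q) = 1) (hG' : (1 - Q') * G' = 1) {y : ι}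
    (hQ' : ∀ a b, Q' a b = if a = y ∨ b = y then 0 else Q a b) {x : ι} (hxy : x ≠ y) :
    G' x x * G y y = G x x * G y y - G x y * G y x := by
  have hrow : ∀ b, G' y b = (1 : Matrix ι ι R) y b := by
    intro b
    have := congr_fun (congr_fun hG' y) b
    rw [Matrix.sub_mul, Matrix.one_mul] at this
    simpa [Matrix.sub_apply, Matrix.mul_apply, hQ'] using this
  have hdiff : ∀ a b, b ≠ y → G a b - G' a b = G a y * (Q * G') y b := by
    intro a b hby
    have hres : G - G' = G * ((Q - Q') * G') := by
      calc G - G' = G * ((1 - Q') * G') - G * (1 - Q) * G' := by rw [hG', hG]; simp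
        _ = G * ((Q - Q') * G') := by noncomm_ring
    have hcol : ∀ c, ((Q - Q') * G') c b = if c = y then (Q * G') y b else 0 := by
      intro c
      by_cases hc : c = y
      · subst hc; simp [Matrix.mul_apply, hQ', Matrix.sub_apply]
      · have hterm : ∀ d, (Q - Q') c d * G' d b = 0 := by
          intro d
          by_cases hd : d = y
          · rw [hd, hrow, Matrix.one_apply_ne hby.symm, mul_zero]
          · simp [Matrix.sub_apply, hQ', hc, hd]
        rw [if_neg hc, Matrix.mul_apply]
        exact sum_eq_zero fun d _ => hterm d
    rw [← Matrix.sub_apply, hres, Matrix.mul_apply]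
    simp [hcol]
  have hxx := hdiff x x hxy
  have hyx := hdiff y x hxy
  rw [hrow, Matrix.one_apply_ne hxy.symm] at hyx
  linear_combination (-G y y) * hxx + G x y * hyx

section MarkovChain

variable {α : Type*} [MeasurableSpace α]

def pathPrefix (n : ℕ) (ω : ℕ → α) : Fin (n + 1) → α := fun i => ω i

lemma measurable_pathPrefix (n : ℕ) : Measurable (pathPrefix (α := α) n) :=
  measurable_pi_lambda _ fun i => measurable_pi_apply (i : ℕ)

lemma measure_exists_notMem_of_subset {μ : α → Measure (ℕ → α)}
    (hprob : ∀ a, IsProbabilityMeasure (μ a))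
    {B B' : Finset α} (hB' : B' ⊆ B) (hexit : ∀ z ∈ B, μ z {ω | ∃ n, ω n ∉ B} = 1) :
    ∀ z ∈ B', μ z {ω | ∃ n, ω n ∉ B'} = 1 := fun z hz =>
  le_antisymm prob_le_one <| (hexit z (hB' hz)).symm.le.trans <|
    measure_mono fun _ ⟨n, hn⟩ => ⟨n, fun h => hn (hB' h)⟩

variable [DecidableEq α]

def HasMarkovLaw (P : α → α → ℝ) (μ : α → Measure (ℕ → α)) : Prop :=
  ∀ (a : α) (n : ℕ) (y : ℕ → α), μ a {ω | ∀ i ≤ n, ω i = y i} =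
    ENNReal.ofReal ((if a = y 0 then (1 : ℝ) else 0) * ∏ i ∈ Finset.Icc 1 n, P (y (i - 1)) (y i))

variable {P : α → α → ℝ} {μ : α → Measure (ℕ → α)}

lemma HasMarkovLaw.measure_pathPrefix_preimage_singleton (hlaw : HasMarkovLaw P μ) (a : α) {n : ℕ}
    (v : Fin (n + 1) → α) :
    μ a (pathPrefix n ⁻¹' {v}) = ENNReal.ofReal (if a = v 0 then pathProd P v else 0) := by
  set y : ℕ → α := fun i => v ⟨min i n, by omega⟩
  have hy : ∀ i : Fin (n + 1), y i = v i := fun i =>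
    congr_arg v (Fin.ext (min_eq_left (Nat.lt_succ_iff.mp i.2)))
  have hcyl : pathPrefix n ⁻¹' {v} = {ω | ∀ i ≤ n, ω i = y i} := by
    ext ω
    simp only [Set.mem_preimage, Set.mem_singleton_iff, funext_iff, pathPrefix, Set.mem_ofPred_eq]
    exact ⟨fun h i hi => (h ⟨i, by omega⟩).trans (hy ⟨i, by omega⟩).symm,
      fun h i => (h i (Nat.lt_succ_iff.mp i.2)).trans (hy i)⟩
  rw [hcyl, hlaw, prod_Icc_one_eq_prod_fin, show y 0 = v 0 from hy 0]
  congr 1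
  split_ifs
  · rw [one_mul]
    exact prod_congr rfl fun j _ => by
      rw [Nat.add_sub_cancel]
      exact congr_arg₂ P (hy j.castSucc) (hy j.succ)
  · rw [zero_mul]

lemma HasMarkovLaw.measure_pathPrefix_preimage [Finite α] [MeasurableSingletonClass α]
    (hP : ∀ a b, 0 ≤ P a b) (hlaw : HasMarkovLaw P μ) (a : α) {n : ℕ}
    (S : Finset (Fin (n + 1) → α)) :
    μ a (pathPrefix n ⁻¹' S) = ENNReal.ofReal (∑ v ∈ S, if a = v 0 then pathProd P v else 0) := by
  rw [← sum_measure_preimage_singleton S fun v _ =>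
      measurable_pathPrefix n (measurableSet_singleton v),
    ENNReal.ofReal_sum_of_nonneg fun v _ => ?_]
  · exact sum_congr rfl fun v _ => hlaw.measure_pathPrefix_preimage_singleton a v
  · split_ifs
    exacts [prod_nonneg fun j _ => hP _ _, le_rfl]

lemma HasMarkovLaw.measure_mem_and_forall_mem [Fintype α] [MeasurableSingletonClass α]
    (hP : ∀ a b, 0 ≤ P a b) (hlaw : HasMarkovLaw P μ) {B : Finset α} {a : α} (ha : a ∈ B)
    (T : Finset α) (n : ℕ) :
    μ a {ω | ω n ∈ T ∧ ∀ k ≤ n, ω k ∈ B} =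
      ENNReal.ofReal (∑ b ∈ T, (killedKernel P B ^ n) a b) := by
  have hset : {ω | ω n ∈ T ∧ ∀ k ≤ n, ω k ∈ B} =
      pathPrefix n ⁻¹' ↑({v | v (Fin.last n) ∈ T ∧ ∀ i, v i ∈ B} : Finset (Fin (n + 1) → α)) := by
    ext ω
    simp [pathPrefix, Fin.forall_iff]
  rw [hset, hlaw.measure_pathPrefix_preimage hP]
  congr 1
  simp only [pow_apply_eq_sum_pathProd, sum_filter]
  rw [sum_comm]
  refine sum_congr rfl fun v _ => ?_
  by_cases h0 : v 0 = a
  · subst h0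
    simp [pathProd_killedKernel P B ha, ite_and]
  · simp [h0, Ne.symm h0]

lemma HasMarkovLaw.tendsto_sum_killedKernel_pow [Fintype α] [MeasurableSingletonClass α]
    (hP : ∀ a b, 0 ≤ P a b) (hlaw : HasMarkovLaw P μ) (hprob : ∀ a, IsProbabilityMeasure (μ a))
    {B : Finset α} (hexit : ∀ z ∈ B, μ z {ω | ∃ n, ω n ∉ B} = 1) (z : α) :
    Tendsto (fun n => ∑ b, (killedKernel P B ^ n) z b) atTop (𝓝 0) := by
  by_cases hz : z ∈ B
  · set A : ℕ → Set (ℕ → α) := fun n => {ω | ∀ k ≤ n, ω k ∈ B}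
    have hA : ∀ n, ∑ b, (killedKernel P B ^ n) z b = (μ z (A n)).toReal := fun n => by
      rw [← ENNReal.toReal_ofReal (sum_nonneg fun b _ =>
          Matrix.pow_apply_nonneg (killedKernel_nonneg hP B) n z b),
        ← hlaw.measure_mem_and_forall_mem hP hz univ n]
      simp [A]
    have hInter : ⋂ n, A n = {ω | ∃ n, ω n ∉ B}ᶜ := by
      ext ω
      simp only [A, Set.mem_iInter, Set.mem_ofPred_eq, Set.mem_compl_iff, not_exists, not_not]
      exact ⟨fun h k => h k k le_rfl, fun h n k _ => h k⟩
    have hlim := tendsto_measure_iInter_atTop (μ := μ z)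
      (fun n => (by measurability : MeasurableSet (A n)).nullMeasurableSet)
      (fun m n hmn ω hω k hk => hω k (hk.trans hmn)) ⟨0, measure_ne_top _ _⟩
    rw [hInter, (prob_compl_eq_zero_iff (by measurability)).mpr (hexit z hz)] at hlim
    simpa only [hA, Function.comp_def, ENNReal.toReal_zero] using
      (ENNReal.tendsto_toReal ENNReal.zero_ne_top).comp hlim
  · rw [← tendsto_add_atTop_iff_nat 1]
    simp [killedKernel_pow_succ_apply_of_notMem P hz]

lemma HasMarkovLaw.summable_killedKernel_pow [Fintype α] [MeasurableSingletonClass α]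
    (hP : ∀ a b, 0 ≤ P a b) (hlaw : HasMarkovLaw P μ) (hprob : ∀ a, IsProbabilityMeasure (μ a))
    {B : Finset α} (hexit : ∀ z ∈ B, μ z {ω | ∃ n, ω n ∉ B} = 1) :
    Summable (killedKernel P B ^ ·) := by
  obtain ⟨N, hN⟩ := (eventually_all.mpr fun z =>
    (hlaw.tendsto_sum_killedKernel_pow hP hprob hexit z).eventually_le_const
      (by norm_num : (0 : ℝ) < 1 / 2)).exists
  exact summable_pow_of_sum_pow_le (killedKernel_nonneg hP B) (by norm_num) hN

lemma HasMarkovLaw.green_eq_tsum [Fintype α] [MeasurableSingletonClass α]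
    (hP : ∀ a b, 0 ≤ P a b) (hlaw : HasMarkovLaw P μ) {B : Finset α} {a : α} (ha : a ∈ B)
    (b : α) : green μ B a b = ∑' n, (killedKernel P B ^ n) a b := by
  refine tsum_congr fun n => ?_
  rw [← ENNReal.toReal_ofReal (Matrix.pow_apply_nonneg (killedKernel_nonneg hP B) n a b),
    ← sum_singleton (fun b => (killedKernel P B ^ n) a b) b,
    ← hlaw.measure_mem_and_forall_mem hP ha]
  simp

lemma HasMarkovLaw.green_erase_mul_green [Fintype α] [MeasurableSingletonClass α]
    (hP : ∀ a b, 0 ≤ P a b) (hlaw : HasMarkovLaw P μ) (hprob : ∀ a, IsProbabilityMeasure (μ a))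
    {B : Finset α} (hexit : ∀ z ∈ B, μ z {ω | ∃ n, ω n ∉ B} = 1) {x y : α} (hx : x ∈ B)
    (hy : y ∈ B) (hxy : x ≠ y) :
    green μ (B.erase y) x x * green μ B y y =
      green μ B x x * green μ B y y - green μ B x y * green μ B y x := by
  have hs := hlaw.summable_killedKernel_pow hP hprob hexit
  have hs' := hlaw.summable_killedKernel_pow hP hprob
    (measure_exists_notMem_of_subset hprob (B.erase_subset y) hexit)
  simp only [hlaw.green_eq_tsum hP hx, hlaw.green_eq_tsum hP hy,
    hlaw.green_eq_tsum hP (mem_erase.mpr ⟨hxy, hx⟩), ← matrix_tsum_apply hs,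
    ← matrix_tsum_apply hs']
  exact erase_row_col_inv_apply_mul hs.tsum_pow_mul_one_sub hs'.one_sub_mul_tsum_pow
    (killedKernel_erase_apply P B y) hxy

end MarkovChain

theorem green_cross_product_identity_general
    {V : Type*} [Fintype V] [DecidableEq V]
    [MeasurableSpace V] [MeasurableSingletonClass V]
    (P : V → V → ℝ) (μ : V → Measure (ℕ → V))
    (hP0 : ∀ a b : V, 0 ≤ P a b)
    (hprob : ∀ a : V, IsProbabilityMeasure (μ a))
    (hlaw : ∀ (a : V) (n : ℕ) (y : ℕ → V),
      μ a {ω | ∀ i ≤ n, ω i = y i} =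
        ENNReal.ofReal ((if a = y 0 then (1 : ℝ) else 0) *
          ∏ i ∈ Finset.Icc 1 n, P (y (i - 1)) (y i)))
    (B : Finset V)
    (hexit : ∀ z ∈ B, μ z {ω | ∃ n : ℕ, ω n ∉ B} = 1)
    (x y : V) (hx : x ∈ B) (hy : y ∈ B) (hxy : x ≠ y) :
    green μ (B.erase y) x x * green μ B y y = green μ B x x * green μ (B.erase x) y y := by
  rw [HasMarkovLaw.green_erase_mul_green hP0 hlaw hprob hexit hx hy hxy,
    mul_comm (green μ B x x) (green μ (B.erase x) y y),
    HasMarkovLaw.green_erase_mul_green hP0 hlaw hprob hexit hy hx hxy.symm]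
  ring

theorem green_cross_product_identity
    {V : Type*} [Fintype V] [DecidableEq V] [Nonempty V]
    [MeasurableSpace V] [MeasurableSingletonClass V]
    (P : V → V → ℝ) (μ : V → Measure (ℕ → V))
    (hP0 : ∀ a b : V, 0 ≤ P a b) (hP1 : ∀ a : V, ∑ b : V, P a b = 1)
    (hprob : ∀ a : V, IsProbabilityMeasure (μ a))
    (hlaw : ∀ (a : V) (n : ℕ) (y : ℕ → V),
      μ a {ω | ∀ i ≤ n, ω i = y i} =
        ENNReal.ofReal ((if a = y 0 then (1 : ℝ) else 0) *
          ∏ i ∈ Finset.Icc 1 n, P (y (i - 1)) (y i)))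
    (B : Finset V) (hB : B ≠ Finset.univ)
    (hexit : ∀ z ∈ B, μ z {ω | ∃ n : ℕ, ω n ∉ B} = 1)
    (x y : V) (hx : x ∈ B) (hy : y ∈ B) (hxy : x ≠ y) :
    green μ (B.erase y) x x * green μ B y y = green μ B x x * green μ (B.erase x) y y :=
  green_cross_product_identity_general P μ hP0 hprob hlaw B hexit x y hx hy hxy

end LERW
end

section
/- Let V be a finite set, b ∈ V, and let w be a finite path on V. If b does not occur among the entries of the loop erasure 𝔏(w), then the partial loop erasure associated with V ∖ {b} coincides with the full loop erasure: 𝔏_{V∖{b}}(w) = 𝔏(w). -/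
open MeasureTheory

namespace LERW

variable {V : Type*} [DecidableEq V]

variable [Fintype V]

variable [MeasurableSpace V]

section

variable {α : Type*} [DecidableEq α]

/-- `PLE S` tests membership in `S` only at the vertices it keeps, so it depends on `S` only
through the vertices of its output. -/
theorem PLE_congr {S T : Finset α} {w : List α} (h : ∀ x ∈ PLE T w, x ∈ S ↔ x ∈ T) :
    PLE S w = PLE T w := by
  fun_induction PLE T w with
  | case1 => simp [PLE]
  | case2 a rest haT hlast =>
    have haS : a ∈ S := (h a (by simp)).2 haT
    rw [PLE, if_pos haS, if_pos hlast]
  | case3 a rest haT hlast ih =>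
    have haS : a ∈ S := (h a (by simp)).2 haT
    rw [PLE, if_pos haS, if_neg hlast, ih fun x hx => h x (List.mem_cons_of_mem a hx)]
  | case4 a haT =>
    have haS : a ∉ S := fun haS => haT ((h a (by simp)).1 haS)
    rw [PLE, if_neg haS, if_pos rfl]
  | case5 a rest haT hrest ih =>
    have haS : a ∉ S := fun haS => haT ((h a (by simp)).1 haS)
    rw [PLE, if_neg haS, if_neg hrest, ih fun x hx => h x (List.mem_cons_of_mem a hx)]
end

theorem PLE_erase_eq_LE_of_not_mem_LE
    {V : Type*} [Fintype V] [DecidableEq V] (b : V) (w : List V)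
    (hb : b ∉ LE w) :
    PLE (Finset.univ \ {b}) w = LE w :=
  PLE_congr fun x hx => by simpa using ne_of_mem_of_not_mem hx hb

end LERW
end
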